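/- Let (Ω, μ) be a finite measure space, (f_k) a uniformly bounded sequence of measurable functions, and f a bounded measurable function. If limsup_{k→∞} f_k(x) ≤ f(x) for almost every x and ∫ f_k dμ → ∫ f dμ, then f_k → f in L^1(μ). -/
import Mathlib


open MeasureTheory Filter

/-- If a uniformly bounded sequence satisfies `limsup f_k ≤ f` a.e. and the integrals
converge, then `f_k → f` in `L¹` on a finite measure space. -/
theorem l1_convergence_of_limsup_le_of_integral_tendsto
    {Ω : Type*} [MeasurableSpace Ω] (μ : Measure Ω) [IsFiniteMeasure μ]
    (f : Ω → ℝ) (fk : ℕ → Ω → ℝ)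
    (hf : Measurable f) (hfk : ∀ k, Measurable (fk k))
    (M : ℝ)
    (hbk : ∀ k, ∀ᵐ x ∂μ, |fk k x| ≤ M)
    (hbf : ∀ᵐ x ∂μ, |f x| ≤ M)
    (hlimsup : ∀ᵐ x ∂μ, Filter.limsup (fun k => fk k x) atTop ≤ f x)
    (hint : Tendsto (fun k => ∫ x, fk k x ∂μ) atTop (nhds (∫ x, f x ∂μ))) :
    Tendsto (fun k => ∫ x, |fk k x - f x| ∂μ) atTop (nhds 0) := by
  have hfkint : ∀ k, Integrable (fk k) μ := fun k =>
    (integrable_const M).mono' (hfk k).aestronglyMeasurable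
      ((hbk k).mono fun x hx => by simpa using hx)
  have hfint : Integrable f μ :=
    (integrable_const M).mono' hf.aestronglyMeasurable (hbf.mono fun x hx => by simpa using hx)
  set g : ℕ → Ω → ℝ := fun k x => max (fk k x - f x) 0 with hgdef
  have hgabs : ∀ k x, |g k x| ≤ |fk k x - f x| := fun k x => by
    rw [abs_of_nonneg (le_max_right _ _)]
    exact max_le (le_abs_self _) (abs_nonneg _)
  have hbound : ∀ k, ∀ᵐ x ∂μ, ‖g k x‖ ≤ M + M := by
    intro k
    filter_upwards [hbk k, hbf] with x h1 h2
    calc ‖g k x‖ = |g k x| := rfl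
      _ ≤ |fk k x - f x| := hgabs k x
      _ ≤ |fk k x| + |f x| := abs_sub _ _
      _ ≤ M + M := add_le_add h1 h2
  have hball : ∀ᵐ x ∂μ, ∀ k, |fk k x| ≤ M := (ae_all_iff).2 hbk
  have hgtend : ∀ᵐ x ∂μ, Tendsto (fun k => g k x) atTop (nhds 0) := by
    filter_upwards [hball, hlimsup] with x hb hls
    rw [NormedAddCommGroup.tendsto_nhds_zero]
    intro ε hε
    have hbdd : IsBoundedUnder (· ≤ ·) atTop (fun k => fk k x) :=
      isBoundedUnder_of ⟨M, fun k => (abs_le.1 (hb k)).2⟩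
    have hlt : Filter.limsup (fun k => fk k x) atTop < f x + ε :=
      lt_of_le_of_lt hls (by linarith)
    have := Filter.eventually_lt_of_limsup_lt hlt hbdd
    filter_upwards [this] with k hk
    have h0 : (0:ℝ) ≤ g k x := le_max_right _ _
    have : g k x < ε := max_lt (by linarith) hε
    simpa [Real.norm_eq_abs, abs_of_nonneg h0] using this
  have hgint : ∀ k, Integrable (g k) μ := fun k =>
    (integrable_const (M + M)).mono'
      (((hfk k).sub hf).max measurable_const).aestronglyMeasurable (hbound k)
  have hgintT : Tendsto (fun k => ∫ x, g k x ∂μ) atTop (nhds 0) := by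
    have := tendsto_integral_of_dominated_convergence (fun _ => M + M)
      (fun k => (((hfk k).sub hf).max measurable_const).aestronglyMeasurable)
      (integrable_const (M + M)) hbound hgtend
    simpa using this
  have key : ∀ k, ∫ x, |fk k x - f x| ∂μ =
      ((∫ x, f x ∂μ) - ∫ x, fk k x ∂μ) + 2 * ∫ x, g k x ∂μ := by
    intro k
    have heq : ∀ x, |fk k x - f x| = (f x - fk k x) + 2 * g k x := by
      intro x
      rcases le_total (f x) (fk k x) with h | h
      · rw [abs_of_nonneg (by linarith), hgdef]
        simp only [max_eq_left (by linarith : (0:ℝ) ≤ fk k x - f x)]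
        ring
      · rw [abs_of_nonpos (by linarith), hgdef]
        simp only [max_eq_right (by linarith : fk k x - f x ≤ 0)]
        ring
    calc ∫ x, |fk k x - f x| ∂μ = ∫ x, ((f x - fk k x) + 2 * g k x) ∂μ := by
          exact integral_congr_ae (Filter.Eventually.of_forall fun x => heq x)
      _ = (∫ x, (f x - fk k x) ∂μ) + ∫ x, 2 * g k x ∂μ :=
          integral_add (hfint.sub (hfkint k)) ((hgint k).const_mul 2)
      _ = ((∫ x, f x ∂μ) - ∫ x, fk k x ∂μ) + 2 * ∫ x, g k x ∂μ := by
          rw [integral_sub hfint (hfkint k), integral_const_mul]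
  have hT : Tendsto (fun k => ((∫ x, f x ∂μ) - ∫ x, fk k x ∂μ) + 2 * ∫ x, g k x ∂μ)
      atTop (nhds 0) := by
    have h1 : Tendsto (fun k => (∫ x, f x ∂μ) - ∫ x, fk k x ∂μ) atTop (nhds 0) := by
      simpa using ((tendsto_const_nhds (x := ∫ x, f x ∂μ)).sub hint)
    have h2 : Tendsto (fun k => 2 * ∫ x, g k x ∂μ) atTop (nhds 0) := by
      simpa using hgintT.const_mul 2
    simpa using h1.add h2
  exact hT.congr fun k => (key k).symm
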